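/- arXiv:1903.02066 — 2 statements merged into one kernel-verified Lean document; each statement's English description precedes it below -/
import Mathlib

section
/- Suppose the signed n×n matrix measure η has a δ-exponential moment and satisfies Condition (C). Then for every ε ∈ (0,δ), sup { ‖z·h_η(z)^{−1}‖ : z ∈ ℂ, Re(z) ≥ −ε, z ≠ 0 } < ∞; equivalently, the analytic extension of z ↦ z·h_η(z)^{−1} is bounded on the closed half-plane {z : Re(z) ≥ −ε}. -/
open MeasureTheory Matrix Complex Set

noncomputable section

/-- Euclidean norm on `Fin n → ℝ`. -/
def euclNorm {n : ℕ} (v : Fin n → ℝ) : ℝ := Real.sqrt (∑ i, v i ^ 2)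

/-- Frobenius norm of a real square matrix. -/
def frobR {n : ℕ} (A : Matrix (Fin n) (Fin n) ℝ) : ℝ := Real.sqrt (∑ i, ∑ j, A i j ^ 2)

/-- Frobenius norm of a complex square matrix. -/
def frobC {n : ℕ} (A : Matrix (Fin n) (Fin n) ℂ) : ℝ :=
  Real.sqrt (∑ i, ∑ j, ‖A i j‖ ^ 2)

/-- Integral of a real function over `s` against a finite signed measure
(via the Jordan decomposition). -/
def sIntOn (μ : SignedMeasure ℝ) (s : Set ℝ) (f : ℝ → ℝ) : ℝ :=
  (∫ t in s, f t ∂μ.toJordanDecomposition.posPart) -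
    ∫ t in s, f t ∂μ.toJordanDecomposition.negPart

/-- Integral of a complex function over `s` against a finite signed measure. -/
def sIntOnC (μ : SignedMeasure ℝ) (s : Set ℝ) (f : ℝ → ℂ) : ℂ :=
  (∫ t in s, f t ∂μ.toJordanDecomposition.posPart) -
    ∫ t in s, f t ∂μ.toJordanDecomposition.negPart

/-- The signed matrix measure `η` is supported on `[0,∞)`. -/
def SuppNonneg {n : ℕ} (η : Matrix (Fin n) (Fin n) (SignedMeasure ℝ)) : Prop :=
  ∀ i j, (η i j).totalVariation (Set.Iio 0) = 0

/-- `η` has a `δ`-exponential moment: `∫ e^{δ t} |η_ij|(dt) < ∞`. -/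
def ExpMoment {n : ℕ} (δ : ℝ) (η : Matrix (Fin n) (Fin n) (SignedMeasure ℝ)) : Prop :=
  ∀ i j, (∫⁻ t, ENNReal.ofReal (Real.exp (δ * t)) ∂(η i j).totalVariation) < ⊤

/-- The Laplace transform `L[η](z)`, an `n × n` complex matrix. -/
def lapM {n : ℕ} (η : Matrix (Fin n) (Fin n) (SignedMeasure ℝ)) (z : ℂ) :
    Matrix (Fin n) (Fin n) ℂ :=
  Matrix.of fun i j => sIntOnC (η i j) (Set.Ici 0) fun t => Complex.exp (-z * t)

/-- `h_η(z) = z Iₙ − L[η](z)`. -/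
def hEta {n : ℕ} (η : Matrix (Fin n) (Fin n) (SignedMeasure ℝ)) (z : ℂ) :
    Matrix (Fin n) (Fin n) ℂ :=
  z • (1 : Matrix (Fin n) (Fin n) ℂ) - lapM η z

/-- `Π₀ = η([0,∞))`. -/
def Pi0 {n : ℕ} (η : Matrix (Fin n) (Fin n) (SignedMeasure ℝ)) : Matrix (Fin n) (Fin n) ℝ :=
  Matrix.of fun i j => η i j (Set.Ici 0)

/-- `π(t) = η([0,t]) − η([0,∞))`. -/
def piFun {n : ℕ} (η : Matrix (Fin n) (Fin n) (SignedMeasure ℝ)) (t : ℝ) :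
    Matrix (Fin n) (Fin n) ℝ :=
  Matrix.of fun i j => η i j (Set.Icc 0 t) - η i j (Set.Ici 0)

/-- `Π([0,∞)) = ∫_0^∞ π(t) dt`. -/
def PiInf {n : ℕ} (η : Matrix (Fin n) (Fin n) (SignedMeasure ℝ)) : Matrix (Fin n) (Fin n) ℝ :=
  Matrix.of fun i j => ∫ t in Set.Ioi (0 : ℝ), piFun η t i j

/-- Condition (C): `det h_η(z) ≠ 0` on `ℍ_δ \ {0}`, and `G` is an analytic extension of
`z ↦ z • h_η(z)⁻¹` to all of `ℍ_δ`. -/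
def CondC {n : ℕ} (δ : ℝ) (η : Matrix (Fin n) (Fin n) (SignedMeasure ℝ))
    (G : ℂ → Matrix (Fin n) (Fin n) ℂ) : Prop :=
  (∀ z : ℂ, -δ < z.re → z ≠ 0 → (hEta η z).det ≠ 0) ∧
  (∀ i j, DifferentiableOn ℂ (fun z => G z i j) {z : ℂ | -δ < z.re}) ∧
  ∀ z : ℂ, -δ < z.re → z ≠ 0 → G z = z • (hEta η z)⁻¹

/-- The process `Z` has stationary increments (equality of all finite-dimensional
distributions of the increment processes). -/
def StatInc {n : ℕ} {Ω : Type} [MeasurableSpace Ω] (P : Measure Ω)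
    (Z : ℝ → Ω → Fin n → ℝ) : Prop :=
  ∀ (h : ℝ) (k : ℕ) (ts : Fin k → ℝ),
    Measure.map (fun ω (m : Fin k) => Z (ts m + h) ω - Z h ω) P =
      Measure.map (fun ω (m : Fin k) => Z (ts m) ω - Z 0 ω) P

/-- The pair `(X, Z)` has stationary increments. -/
def PairStatInc {n : ℕ} {Ω : Type} [MeasurableSpace Ω] (P : Measure Ω)
    (X Z : ℝ → Ω → Fin n → ℝ) : Prop :=
  ∀ (h : ℝ) (k : ℕ) (ts : Fin k → ℝ),
    Measure.map (fun ω (m : Fin k) =>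
        (X (ts m + h) ω - X h ω, Z (ts m + h) ω - Z h ω)) P =
      Measure.map (fun ω (m : Fin k) => (X (ts m) ω - X 0 ω, Z (ts m) ω - Z 0 ω)) P

/-- The driving noise: measurable, `Z_0 = 0`, stationary increments,
square-integrable marginals. -/
def GoodNoise {n : ℕ} {Ω : Type} [MeasurableSpace Ω] (P : Measure Ω)
    (Z : ℝ → Ω → Fin n → ℝ) : Prop :=
  Measurable (Function.uncurry Z) ∧ (∀ ω, Z 0 ω = 0) ∧ StatInc P Z ∧
    ∀ t, Integrable (fun ω => euclNorm (Z t ω) ^ 2) P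

/-- `X` is a solution of the MSDDE `dX_t = η ∗ X(t) dt + dZ_t`. -/
def IsMSDDESolution {n : ℕ} {Ω : Type} [MeasurableSpace Ω] (P : Measure Ω)
    (η : Matrix (Fin n) (Fin n) (SignedMeasure ℝ)) (Z X : ℝ → Ω → Fin n → ℝ) : Prop :=
  Measurable (Function.uncurry X) ∧
  (∀ t, Integrable (fun ω => euclNorm (X t ω) ^ 2) P) ∧
  PairStatInc P X Z ∧
  ∀ s t : ℝ, s < t → ∀ i, ∀ᵐ ω ∂P,
    X t ω i - X s ω i =
      (∑ j, ∫ u in s..t, sIntOn (η i j) (Set.Ici 0) fun v => X (u - v) ω j) +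
        (Z t ω i - Z s ω i)

/-- Specification of the kernel `f` from the Granger-type representation theorem:
vanishing on negatives, exponentially decaying, with Laplace transform
`Iₙ − z h_η(z)⁻¹` (via the analytic extension `G`). -/
def FSpec {n : ℕ} (δ : ℝ) (G : ℂ → Matrix (Fin n) (Fin n) ℂ)
    (f : ℝ → Matrix (Fin n) (Fin n) ℝ) : Prop :=
  (∀ i j, Measurable fun t => f t i j) ∧ (∀ t < (0 : ℝ), f t = 0) ∧
  (∀ ε, 0 < ε → ε < δ → ∃ M, ∀ t, 0 ≤ t → Real.exp (ε * t) * frobR (f t) ≤ M) ∧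
  ∀ z : ℂ, -δ < z.re → ∀ i j,
    (∫ t in Set.Ici (0 : ℝ), Complex.exp (-z * t) * (f t i j : ℂ)) =
      ((1 : Matrix (Fin n) (Fin n) ℂ) - G z) i j

/-- `f_r = 1_{[0,∞)}(· − r) − 1_{[0,∞)}`. -/
def frFun (r x : ℝ) : ℝ :=
  Set.indicator (Set.Ici r) (fun _ => (1 : ℝ)) x - Set.indicator (Set.Ici 0) (fun _ => (1 : ℝ)) x

/-- `I` is an integration map (regular integrator) for the one-dimensional noise `Zi`. -/
def IsRegIntegrator {Ω : Type} [MeasurableSpace Ω] (P : Measure Ω) (Zi : ℝ → Ω → ℝ)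
    (I : (ℝ → ℝ) → Ω → ℝ) : Prop :=
  (∀ f : ℝ → ℝ, Integrable f volume → MemLp f 2 volume → Integrable (I f) P) ∧
  (∀ f g : ℝ → ℝ, Integrable f volume → MemLp f 2 volume → Integrable g volume →
    MemLp g 2 volume → I (f + g) =ᵐ[P] I f + I g) ∧
  (∀ (c : ℝ) (f : ℝ → ℝ), Integrable f volume → MemLp f 2 volume →
    I (c • f) =ᵐ[P] c • I f) ∧
  (∀ s t : ℝ, s < t →
    I (Set.indicator (Set.Ioc s t) fun _ => (1 : ℝ)) =ᵐ[P] fun ω => Zi t ω - Zi s ω) ∧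
  (∀ (μ : Measure ℝ) [IsFiniteMeasure μ], Integrable (fun r => |r|) μ → ∀ t : ℝ,
    ∀ᵐ ω ∂P, Integrable (fun r => I (fun s => frFun r (t - s)) ω) μ ∧
      I (fun s => ∫ r, frFun r (t - s) ∂μ) ω = ∫ r, I (fun s => frFun r (t - s)) ω ∂μ)

/-! For `Re z ≥ -δ` every entry of `L[η](z)` is bounded by twice the `δ`-exponential moment,
so `‖L[η](z)‖ ≤ C` uniformly. Writing `z • h_η(z)⁻¹ = (1 - z⁻¹ L[η](z))⁻¹`, a Neumann-type
estimate bounds it by `2 ‖1‖` as soon as `‖z‖ ≥ 2C`. On the remaining compact part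
`{Re z ≥ -ε, ‖z‖ ≤ R}` of the half-plane, the analytic extension is continuous, hence bounded. -/

attribute [local instance] Matrix.frobeniusNormedAddCommGroup Matrix.frobeniusNormedSpace
  Matrix.frobeniusNormedRing Matrix.frobeniusNormedAlgebra

lemma frobC_eq_norm {n : ℕ} (A : Matrix (Fin n) (Fin n) ℂ) : frobC A = ‖A‖ := by
  rw [frobC, Matrix.frobenius_norm_def, ← Real.sqrt_eq_rpow]
  simp only [Real.rpow_two]

lemma frobC_le_of_norm_apply_le {n : ℕ} {A : Matrix (Fin n) (Fin n) ℂ}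
    {c : Fin n → Fin n → ℝ} (h : ∀ i j, ‖A i j‖ ≤ c i j) :
    frobC A ≤ Real.sqrt (∑ i, ∑ j, c i j ^ 2) :=
  Real.sqrt_le_sqrt <| Finset.sum_le_sum fun i _ => Finset.sum_le_sum fun j _ =>
    pow_le_pow_left₀ (norm_nonneg _) (h i j) 2

lemma norm_setIntegral_Ici_exp_le {ν : Measure ℝ} {δ : ℝ}
    (hν : ∫⁻ t, ENNReal.ofReal (Real.exp (δ * t)) ∂ν ≠ ⊤) {z : ℂ} (hz : -δ ≤ z.re) :
    ‖∫ t in Ici (0 : ℝ), Complex.exp (-z * t) ∂ν‖ ≤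
      (∫⁻ t, ENNReal.ofReal (Real.exp (δ * t)) ∂ν).toReal := by
  refine (norm_integral_le_lintegral_norm _).trans (ENNReal.toReal_mono hν ?_)
  refine (setLIntegral_mono' measurableSet_Ici fun t (ht : 0 ≤ t) => ?_).trans
    (setLIntegral_le_lintegral _ _)
  rw [Complex.norm_exp]
  refine ENNReal.ofReal_le_ofReal (Real.exp_le_exp.2 ?_)
  have : (-z * (t : ℂ)).re = -z.re * t := by simp [Complex.mul_re]
  rw [this]
  exact mul_le_mul_of_nonneg_right (by linarith) ht

lemma norm_sIntOnC_exp_le (μ : SignedMeasure ℝ) {δ : ℝ}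
    (hμ : ∫⁻ t, ENNReal.ofReal (Real.exp (δ * t)) ∂μ.totalVariation ≠ ⊤) {z : ℂ}
    (hz : -δ ≤ z.re) :
    ‖sIntOnC μ (Ici 0) fun t => Complex.exp (-z * t)‖ ≤
      2 * (∫⁻ t, ENNReal.ofReal (Real.exp (δ * t)) ∂μ.totalVariation).toReal := by
  have part_le {ν : Measure ℝ} (hν : ν ≤ μ.totalVariation) :
      ‖∫ t in Ici (0 : ℝ), Complex.exp (-z * t) ∂ν‖ ≤
        (∫⁻ t, ENNReal.ofReal (Real.exp (δ * t)) ∂μ.totalVariation).toReal := by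
    have hmono := lintegral_mono' hν (le_refl fun t => ENNReal.ofReal (Real.exp (δ * t)))
    exact (norm_setIntegral_Ici_exp_le (ne_top_of_le_ne_top hμ hmono) hz).trans
      (ENNReal.toReal_mono hμ hmono)
  have hpos := part_le (Measure.le_add_right le_rfl)
  have hneg := part_le (Measure.le_add_left le_rfl)
  calc _ ≤ _ := norm_sub_le _ _
    _ ≤ _ := by linarith

lemma exists_frobC_lapM_le {n : ℕ} {δ : ℝ} {η : Matrix (Fin n) (Fin n) (SignedMeasure ℝ)}
    (hmom : ExpMoment δ η) : ∃ C, ∀ z : ℂ, -δ ≤ z.re → frobC (lapM η z) ≤ C :=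
  ⟨_, fun _ hz => frobC_le_of_norm_apply_le fun i j =>
    norm_sIntOnC_exp_le (η i j) (hmom i j).ne hz⟩

lemma norm_le_two_mul_norm_one_of_one_sub_mul_eq_one {R : Type*} [NormedRing R] {B G : R}
    (hB : ‖B‖ ≤ 1 / 2) (h : (1 - B) * G = 1) : ‖G‖ ≤ 2 * ‖(1 : R)‖ := by
  have hG : G = 1 + B * G := by rw [sub_mul, one_mul, sub_eq_iff_eq_add] at h; exact h
  have : ‖G‖ ≤ ‖(1 : R)‖ + ‖B‖ * ‖G‖ :=
    calc ‖G‖ = ‖1 + B * G‖ := congrArg _ hG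
      _ ≤ ‖(1 : R)‖ + ‖B * G‖ := norm_add_le _ _
      _ ≤ ‖(1 : R)‖ + ‖B‖ * ‖G‖ := by gcongr; exact norm_mul_le _ _
  nlinarith [norm_nonneg G]

lemma norm_smul_inv_smul_one_sub_le {m : Type*} [Fintype m] [DecidableEq m]
    {L : Matrix m m ℂ} {z : ℂ} (hz : 2 * ‖L‖ ≤ ‖z‖) (hz0 : z ≠ 0)
    (hdet : (z • (1 : Matrix m m ℂ) - L).det ≠ 0) :
    ‖z • (z • (1 : Matrix m m ℂ) - L)⁻¹‖ ≤ 2 * ‖(1 : Matrix m m ℂ)‖ := by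
  have hfac : z • (1 : Matrix m m ℂ) - L = z • (1 - z⁻¹ • L) := by
    rw [smul_sub, smul_smul, mul_inv_cancel₀ hz0, one_smul]
  refine norm_le_two_mul_norm_one_of_one_sub_mul_eq_one (B := z⁻¹ • L) ?_ ?_
  · rw [norm_smul, norm_inv, inv_mul_le_iff₀ (norm_pos_iff.2 hz0)]
    linarith
  · rw [Matrix.mul_smul, ← Matrix.smul_mul, ← hfac,
      Matrix.mul_nonsing_inv _ (isUnit_iff_ne_zero.2 hdet)]

lemma IsClosed.exists_bound_of_continuousOn_of_bound_off_ball {X E : Type*}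
    [NormedAddCommGroup X] [ProperSpace X] [SeminormedAddCommGroup E] {f : X → E} {S : Set X}
    (hS : IsClosed S) (hf : ContinuousOn f S) {R M : ℝ}
    (hM : ∀ x ∈ S, R ≤ ‖x‖ → ‖f x‖ ≤ M) : ∃ M', ∀ x ∈ S, ‖f x‖ ≤ M' := by
  obtain ⟨C, hC⟩ := ((isCompact_closedBall (0 : X) R).inter_left hS).exists_bound_of_continuousOn
    (hf.mono inter_subset_left)
  refine ⟨max C M, fun x hx => ?_⟩
  rcases le_total ‖x‖ R with hxR | hxR
  · exact (hC x ⟨hx, mem_closedBall_zero_iff.2 hxR⟩).trans (le_max_left _ _)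
  · exact (hM x hx hxR).trans (le_max_right _ _)

theorem statement12_general {n : ℕ} (δ : ℝ)
    (η : Matrix (Fin n) (Fin n) (SignedMeasure ℝ))
    (hmom : ExpMoment δ η)
    (G : ℂ → Matrix (Fin n) (Fin n) ℂ) (hC : CondC δ η G) :
    ∀ ε : ℝ, 0 < ε → ε < δ → ∃ M : ℝ, ∀ z : ℂ, -ε ≤ z.re → frobC (G z) ≤ M := by
  intro ε _ hεδ
  obtain ⟨hdet, hG_diff, hG_eq⟩ := hC
  obtain ⟨C, hL⟩ := exists_frobC_lapM_le hmom
  have hS : {z : ℂ | -ε ≤ z.re} ⊆ {z : ℂ | -δ < z.re} := fun z (hz : -ε ≤ z.re) =>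
    show -δ < z.re by linarith
  have hG_cont : ContinuousOn G {z : ℂ | -ε ≤ z.re} :=
    continuousOn_pi.2 fun i => continuousOn_pi.2 fun j => ((hG_diff i j).mono hS).continuousOn
  have hG_far (z : ℂ) (hz : z ∈ {z : ℂ | -ε ≤ z.re}) (hzR : max (2 * C) 1 ≤ ‖z‖) :
      ‖G z‖ ≤ 2 * ‖(1 : Matrix (Fin n) (Fin n) ℂ)‖ := by
    have hz0 : z ≠ 0 := norm_pos_iff.1 (by linarith [le_max_right (2 * C) 1])
    have hzδ : -δ < z.re := hS hz
    rw [hG_eq z hzδ hz0]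
    refine norm_smul_inv_smul_one_sub_le ?_ hz0 (hdet z hzδ hz0)
    linarith [le_max_left (2 * C) 1, frobC_eq_norm (lapM η z) ▸ hL z hzδ.le]
  have hS_closed : IsClosed {z : ℂ | -ε ≤ z.re} := isClosed_le continuous_const continuous_re
  obtain ⟨M, hM⟩ := hS_closed.exists_bound_of_continuousOn_of_bound_off_ball hG_cont hG_far
  exact ⟨M, fun z hz => (frobC_eq_norm _).trans_le (hM z hz)⟩

/-- Under a `δ`-exponential moment and Condition (C), for each
`ε ∈ (0,δ)` the analytic extension `G` of `z ↦ z h_η(z)⁻¹` is bounded on the closed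
half-plane `{Re z ≥ −ε}`. -/
theorem statement12 {n : ℕ} (hn : 1 ≤ n) (δ : ℝ) (hδ : 0 < δ)
    (η : Matrix (Fin n) (Fin n) (SignedMeasure ℝ))
    (hsupp : SuppNonneg η) (hmom : ExpMoment δ η)
    (G : ℂ → Matrix (Fin n) (Fin n) ℂ) (hC : CondC δ η G) :
    ∀ ε : ℝ, 0 < ε → ε < δ → ∃ M : ℝ, ∀ z : ℂ, -ε ≤ z.re → frobC (G z) ≤ M :=
  statement12_general δ η hmom G hC
end
end

section
/- Suppose the signed n×n matrix measure η has a δ-exponential moment and satisfies Condition (C), let f be as specified, and define C₀ := I_n − ∫_0^∞ f(u) du, C(t) := ∫_t^∞ f(u) du, and C̃(t) := C₀ + C(t) for t ≥ 0. Then C̃(0) = I_n and for all 0 ≤ s < t, C̃(t) − C̃(s) = ∫_s^t (∫_{[0,u]} C̃(u−v) η(dv)) du, where (∫_{[0,u]} C̃(u−v) η(dv))_ij = Σ_{k=1}^n ∫_{[0,u]} C̃_ik(u−v) η_kj(dv). -/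
open MeasureTheory Matrix Complex Set

noncomputable section

/-!
Write `H(z) = h_η(z)⁻¹` for `Re z > 0`. Since `C̃(t) = Iₙ − ∫_0^t f`, the Laplace transform of
`C̃` is `(Iₙ − (Iₙ − z H(z))) / z = H(z)`, so the Laplace transform of the convolution `C̃ ∗ η` is
`H(z) L[η](z) = z H(z) − Iₙ`, while that of `f` is `Iₙ − z H(z)`. Thus `w = f + C̃ ∗ η` has
vanishing Laplace transform, hence so has its primitive `F`, a continuous function of linear
growth vanishing on `(-∞, 0]`. Fourier inversion for `e^{-t} F(t)` gives `F = 0`, that is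
`∫_s^t (C̃ ∗ η) = −∫_s^t f = C̃(t) − C̃(s)`.
-/

def laplace (φ : ℝ → ℝ) (z : ℂ) : ℂ := ∫ t in Ici (0 : ℝ), Complex.exp (-z * t) * φ t

def BoundedMeasurable (φ : ℝ → ℝ) : Prop := Measurable φ ∧ ∃ K, ∀ t, |φ t| ≤ K

namespace BoundedMeasurable

variable {φ ψ : ℝ → ℝ}

lemma const (c : ℝ) : BoundedMeasurable fun _ => c := ⟨measurable_const, |c|, fun _ => le_rfl⟩

lemma add (hφ : BoundedMeasurable φ) (hψ : BoundedMeasurable ψ) :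
    BoundedMeasurable fun t => φ t + ψ t := by
  obtain ⟨hφm, K, hK⟩ := hφ
  obtain ⟨hψm, L, hL⟩ := hψ
  exact ⟨hφm.add hψm, K + L, fun t => (abs_add_le _ _).trans (add_le_add (hK t) (hL t))⟩

lemma sub (hφ : BoundedMeasurable φ) (hψ : BoundedMeasurable ψ) :
    BoundedMeasurable fun t => φ t - ψ t := by
  simpa only [sub_eq_add_neg] using hφ.add (ψ := fun t => -ψ t)
    ⟨hψ.1.neg, hψ.2.imp fun _ h t => (abs_neg (ψ t)).trans_le (h t)⟩

lemma sum {ι : Type*} (s : Finset ι) {φ : ι → ℝ → ℝ} (hφ : ∀ i ∈ s, BoundedMeasurable (φ i)) :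
    BoundedMeasurable fun t => ∑ i ∈ s, φ i t := by
  classical
  induction s using Finset.induction_on with
  | empty => simpa using const 0
  | insert i s hi ih =>
    simp only [Finset.sum_insert hi]
    exact (hφ i (Finset.mem_insert_self i s)).add
      (ih fun j hj => hφ j (Finset.mem_insert_of_mem hj))

lemma intervalIntegrable (hφ : BoundedMeasurable φ) (a b : ℝ) :
    IntervalIntegrable φ volume a b := by
  obtain ⟨hφm, K, hK⟩ := hφ
  rw [intervalIntegrable_iff]
  exact (integrableOn_const measure_Ioc_lt_top.ne).mono' hφm.aestronglyMeasurable
    (ae_of_all _ fun t => (Real.norm_eq_abs _).trans_le (hK t))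

lemma integrableOn_laplace (hφ : BoundedMeasurable φ) {z : ℂ} (hz : 0 < z.re) :
    IntegrableOn (fun t : ℝ => Complex.exp (-z * t) * φ t) (Ici 0) := by
  obtain ⟨hφm, K, hK⟩ := hφ
  refine (((integrableOn_Ici_iff_integrableOn_Ioi).mpr (exp_neg_integrableOn_Ioi 0 hz)).mul_const
    K).mono' (by fun_prop) (ae_of_all _ fun t => ?_)
  rw [norm_mul, Complex.norm_exp, Complex.norm_real]
  simp only [neg_mul, Complex.neg_re, Complex.re_mul_ofReal]
  exact mul_le_mul_of_nonneg_left (hK t) (Real.exp_pos _).le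

end BoundedMeasurable

lemma MeasureTheory.Integrable.boundedMeasurable_primitive {φ : ℝ → ℝ} (hφ : Integrable φ) :
    BoundedMeasurable fun t => ∫ u in 0..t, φ u :=
  ⟨(hφ.continuous_primitive 0).measurable, ∫ u, |φ u|, fun _ =>
    intervalIntegral.norm_integral_le_integral_norm_uIoc.trans <|
      setIntegral_le_integral hφ.norm (ae_of_all _ fun u => norm_nonneg (φ u))⟩

section Laplace

variable {φ ψ : ℝ → ℝ} {z : ℂ}

lemma laplace_add (hz : 0 < z.re) (hφ : BoundedMeasurable φ) (hψ : BoundedMeasurable ψ) :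
    laplace (fun t => φ t + ψ t) z = laplace φ z + laplace ψ z := by
  simp only [laplace, Complex.ofReal_add, mul_add]
  exact integral_add (hφ.integrableOn_laplace hz) (hψ.integrableOn_laplace hz)

lemma laplace_sub (hz : 0 < z.re) (hφ : BoundedMeasurable φ) (hψ : BoundedMeasurable ψ) :
    laplace (fun t => φ t - ψ t) z = laplace φ z - laplace ψ z := by
  simp only [laplace, Complex.ofReal_sub, mul_sub]
  exact integral_sub (hφ.integrableOn_laplace hz) (hψ.integrableOn_laplace hz)

lemma laplace_sum {ι : Type*} (s : Finset ι) {φ : ι → ℝ → ℝ} (hz : 0 < z.re)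
    (hφ : ∀ i ∈ s, BoundedMeasurable (φ i)) :
    laplace (fun t => ∑ i ∈ s, φ i t) z = ∑ i ∈ s, laplace (φ i) z := by
  simp only [laplace, Complex.ofReal_sum, Finset.mul_sum]
  exact integral_finsetSum s fun i hi => (hφ i hi).integrableOn_laplace hz

lemma integral_Ici_cexp_neg_mul (hz : 0 < z.re) (a : ℝ) :
    ∫ t in Ici a, Complex.exp (-z * t) = Complex.exp (-z * a) / z := by
  rw [integral_Ici_eq_integral_Ioi, integral_exp_mul_complex_Ioi (by simpa using hz), neg_div,
    div_neg, neg_neg]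

lemma laplace_const (hz : 0 < z.re) (c : ℝ) : laplace (fun _ => c) z = c / z := by
  rw [laplace, integral_mul_const, integral_Ici_cexp_neg_mul hz]
  simp [div_eq_inv_mul]

end Laplace

lemma setIntegral_Ici_comp_sub_right {E : Type*} [NormedAddCommGroup E] [NormedSpace ℝ E]
    (g : ℝ → E) (v : ℝ) : ∫ u in Ici v, g (u - v) = ∫ u in Ici 0, g u := by
  simpa using (measurePreserving_sub_right volume v).setIntegral_preimage_emb
    (measurableEmbedding_subRight v) g (Ici 0)

section Convolution

variable {φ : ℝ → ℝ} {z : ℂ}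

lemma measurable_integral_Icc_comp_sub (μ : Measure ℝ) [SFinite μ] (hφ : Measurable φ) :
    Measurable fun u => ∫ v in Icc 0 u, φ (u - v) ∂μ := by
  have hS : MeasurableSet {q : ℝ × ℝ | 0 ≤ q.2 ∧ q.2 ≤ q.1} :=
    (measurableSet_le measurable_const measurable_snd).inter
      (measurableSet_le measurable_snd measurable_fst)
  have hind := ((hφ.comp (measurable_fst.sub measurable_snd)).stronglyMeasurable.indicator
    hS).integral_prod_right' (ν := μ)
  convert hind.measurable using 2 with u
  rw [← integral_indicator measurableSet_Icc]
  rfl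

lemma BoundedMeasurable.integral_Icc_comp_sub (hφ : BoundedMeasurable φ) (μ : Measure ℝ)
    [IsFiniteMeasure μ] : BoundedMeasurable fun u => ∫ v in Icc 0 u, φ (u - v) ∂μ := by
  obtain ⟨hφm, K, hK⟩ := hφ
  refine ⟨measurable_integral_Icc_comp_sub μ hφm, K * μ.real univ, fun u => ?_⟩
  refine (norm_setIntegral_le_of_norm_le_const (measure_lt_top μ _)
    fun v _ => (Real.norm_eq_abs _).trans_le (hK (u - v))).trans ?_
  exact mul_le_mul_of_nonneg_left (measureReal_mono (subset_univ _))
    ((abs_nonneg _).trans (hK 0))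

/- Fubini for `e^{-zu} φ(u - v) 1_{v ≤ u}` is the convolution theorem: integrating out `v`
first gives the Laplace transform of `u ↦ ∫_{[0,u]} φ(u - v) μ(dv)`, integrating out `u` first
gives `e^{-zv} L[φ](z)`. -/
def laplaceConvIntegrand (φ : ℝ → ℝ) (z : ℂ) (u v : ℝ) : ℂ :=
  Complex.exp (-z * u) * (Iic u).indicator (fun v => (φ (u - v) : ℂ)) v

lemma stronglyMeasurable_laplaceConvIntegrand (hφ : Measurable φ) :
    StronglyMeasurable (Function.uncurry (laplaceConvIntegrand φ z)) := by
  have hS : MeasurableSet {q : ℝ × ℝ | q.2 ≤ q.1} := measurableSet_le measurable_snd measurable_fst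
  have h : Function.uncurry (laplaceConvIntegrand φ z) = fun q : ℝ × ℝ =>
      Complex.exp (-z * q.1) *
        {q : ℝ × ℝ | q.2 ≤ q.1}.indicator (fun q => (φ (q.1 - q.2) : ℂ)) q := by
    ext ⟨u, v⟩; simp [laplaceConvIntegrand, indicator]
  have hexp : Measurable fun q : ℝ × ℝ => Complex.exp (-z * q.1) := by fun_prop
  have hφ' : Measurable fun q : ℝ × ℝ => (φ (q.1 - q.2) : ℂ) := by fun_prop
  rw [h]
  exact hexp.stronglyMeasurable.mul (hφ'.stronglyMeasurable.indicator hS)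

lemma norm_laplaceConvIntegrand_le {K : ℝ} (hK : ∀ t, |φ t| ≤ K) (u v : ℝ) :
    ‖laplaceConvIntegrand φ z u v‖ ≤ K * (Ici v).indicator (fun u => Real.exp (-z.re * u)) u := by
  by_cases h : v ≤ u
  · simpa [laplaceConvIntegrand, h, indicator, Complex.norm_exp, mul_comm] using
      mul_le_mul_of_nonneg_left (hK (u - v)) (Real.exp_pos (-z.re * u)).le
  · simp [laplaceConvIntegrand, h, indicator]

lemma integrable_laplaceConvIntegrand {μ : Measure ℝ} [SFinite μ] (hz : 0 < z.re)
    (hμ : IntegrableOn (fun v => Real.exp (-z.re * v)) (Ici 0) μ) (hφ : BoundedMeasurable φ) :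
    Integrable (Function.uncurry (laplaceConvIntegrand φ z))
      ((volume.restrict (Ici 0)).prod (μ.restrict (Ici 0))) := by
  obtain ⟨hφm, K, hK⟩ := hφ
  have hFm := stronglyMeasurable_laplaceConvIntegrand (z := z) hφm
  have hexp : IntegrableOn (fun u => Real.exp (-z.re * u)) (Ici 0) :=
    (integrableOn_Ici_iff_integrableOn_Ioi).mpr (exp_neg_integrableOn_Ioi 0 hz)
  have hinner : ∀ v, 0 ≤ v → ∫ u in Ici 0, ‖laplaceConvIntegrand φ z u v‖ ≤
      K / z.re * Real.exp (-z.re * v) := by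
    intro v hv
    calc ∫ u in Ici 0, ‖laplaceConvIntegrand φ z u v‖
        ≤ ∫ u in Ici 0, K * (Ici v).indicator (fun u => Real.exp (-z.re * u)) u :=
          integral_mono_of_nonneg (ae_of_all _ fun _ => norm_nonneg _)
            (((integrable_indicator_iff measurableSet_Ici).mpr hexp.integrableOn).const_mul K)
            (ae_of_all _ (norm_laplaceConvIntegrand_le hK · v))
      _ = K / z.re * Real.exp (-z.re * v) := by
        rw [integral_const_mul, setIntegral_indicator measurableSet_Ici, Ici_inter_Ici,
          sup_of_le_right hv, integral_Ici_eq_integral_Ioi,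
          integral_exp_mul_Ioi (by simpa using hz)]
        field_simp
  refine (integrable_prod_iff' hFm.aestronglyMeasurable).mpr ⟨ae_of_all _ fun v => ?_, ?_⟩
  · refine (hexp.const_mul K).mono'
      (hFm.comp_measurable measurable_prodMk_right).aestronglyMeasurable
      (ae_of_all _ fun u => (norm_laplaceConvIntegrand_le hK u v).trans ?_)
    exact mul_le_mul_of_nonneg_left (indicator_le_self' (fun _ _ => (Real.exp_pos _).le) u)
      ((abs_nonneg _).trans (hK 0))
  · refine (hμ.const_mul (K / z.re)).mono' hFm.norm.integral_prod_left'.aestronglyMeasurable ?_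
    filter_upwards [ae_restrict_mem measurableSet_Ici] with v hv
    rw [Real.norm_of_nonneg (integral_nonneg fun _ => norm_nonneg _)]
    exact hinner v hv

lemma laplace_integral_Icc_comp_sub {μ : Measure ℝ} [SFinite μ] (hz : 0 < z.re)
    (hμ : IntegrableOn (fun v => Real.exp (-z.re * v)) (Ici 0) μ) (hφ : BoundedMeasurable φ) :
    laplace (fun u => ∫ v in Icc 0 u, φ (u - v) ∂μ) z =
      laplace φ z * ∫ v in Ici 0, Complex.exp (-z * v) ∂μ := by
  have hleft : ∀ u : ℝ, Complex.exp (-z * u) * (∫ v in Icc 0 u, φ (u - v) ∂μ : ℝ) =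
      ∫ v in Ici 0, laplaceConvIntegrand φ z u v ∂μ := by
    intro u
    simp only [laplaceConvIntegrand]
    rw [integral_const_mul, integral_indicator measurableSet_Iic,
      Measure.restrict_restrict measurableSet_Iic, Iic_inter_Ici, integral_complex_ofReal]
  have hright : ∀ᵐ v ∂μ.restrict (Ici 0),
      ∫ u in Ici 0, laplaceConvIntegrand φ z u v = Complex.exp (-z * v) * laplace φ z := by
    filter_upwards [ae_restrict_mem measurableSet_Ici] with v (hv : 0 ≤ v)
    have hFv : (laplaceConvIntegrand φ z · v) =
        (Ici v).indicator fun u => Complex.exp (-z * u) * (φ (u - v) : ℂ) := by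
      ext u
      by_cases h : v ≤ u <;> simp [laplaceConvIntegrand, h, indicator]
    rw [hFv, setIntegral_indicator measurableSet_Ici, Ici_inter_Ici, sup_of_le_right hv,
      laplace, ← integral_const_mul, ← setIntegral_Ici_comp_sub_right
        (fun u => Complex.exp (-z * v) * (Complex.exp (-z * u) * φ u)) v]
    refine setIntegral_congr_fun measurableSet_Ici fun u _ => ?_
    simp only [← mul_assoc, ← Complex.exp_add, Complex.ofReal_sub]
    ring_nf
  calc laplace (fun u => ∫ v in Icc 0 u, φ (u - v) ∂μ) z
      = ∫ u in Ici 0, (∫ v in Ici 0, laplaceConvIntegrand φ z u v ∂μ) :=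
        integral_congr_ae (ae_of_all _ hleft)
    _ = ∫ v in Ici 0, (∫ u in Ici 0, laplaceConvIntegrand φ z u v) ∂μ :=
        integral_integral_swap (integrable_laplaceConvIntegrand hz hμ hφ)
    _ = ∫ v in Ici 0, Complex.exp (-z * v) * laplace φ z ∂μ := integral_congr_ae hright
    _ = laplace φ z * ∫ v in Ici 0, Complex.exp (-z * v) ∂μ := by
      rw [integral_mul_const, mul_comm]

end Convolution

lemma sub_integral_Ici_add_integral_Ioi {φ : ℝ → ℝ} (hφ : Integrable φ) (c τ : ℝ) :
    (c - ∫ u in Ici 0, φ u) + ∫ u in Ioi τ, φ u = c - ∫ u in 0..τ, φ u := by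
  rw [← intervalIntegral.integral_Ici_sub_Ici' hφ.integrableOn hφ.integrableOn,
    integral_Ici_eq_integral_Ioi (x := τ)]
  ring

lemma laplace_congr {φ ψ : ℝ → ℝ} (h : ∀ t, 0 ≤ t → φ t = ψ t) (z : ℂ) :
    laplace φ z = laplace ψ z :=
  setIntegral_congr_fun measurableSet_Ici fun t ht => by rw [h t ht]

lemma integrableOn_Ici_exp_neg_mul (μ : Measure ℝ) [IsFiniteMeasure μ] {a : ℝ} (ha : 0 ≤ a) :
    IntegrableOn (fun v => Real.exp (-a * v)) (Ici 0) μ := by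
  refine (integrable_const (1 : ℝ)).mono' (by fun_prop) ?_
  filter_upwards [ae_restrict_mem measurableSet_Ici] with v (hv : 0 ≤ v)
  rw [Real.norm_of_nonneg (Real.exp_pos _).le, Real.exp_le_one_iff]
  nlinarith

lemma BoundedMeasurable.sIntOn_Icc_comp_sub {φ : ℝ → ℝ} (hφ : BoundedMeasurable φ)
    (μ : SignedMeasure ℝ) : BoundedMeasurable fun u => sIntOn μ (Icc 0 u) fun v => φ (u - v) :=
  (hφ.integral_Icc_comp_sub _).sub (hφ.integral_Icc_comp_sub _)

lemma laplace_sIntOn_Icc_comp_sub {φ : ℝ → ℝ} {z : ℂ} (hz : 0 < z.re)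
    (hφ : BoundedMeasurable φ) (μ : SignedMeasure ℝ) :
    laplace (fun u => sIntOn μ (Icc 0 u) fun v => φ (u - v)) z =
      laplace φ z * sIntOnC μ (Ici 0) fun v => Complex.exp (-z * v) := by
  rw [sIntOnC, mul_sub, ← laplace_integral_Icc_comp_sub hz
      (integrableOn_Ici_exp_neg_mul _ hz.le) hφ,
    ← laplace_integral_Icc_comp_sub hz (integrableOn_Ici_exp_neg_mul _ hz.le) hφ]
  exact laplace_sub hz (hφ.integral_Icc_comp_sub _) (hφ.integral_Icc_comp_sub _)

lemma laplace_intervalIntegral {w : ℝ → ℝ} {z : ℂ} (hz : 0 < z.re) (hw : BoundedMeasurable w) :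
    laplace (fun t => ∫ u in 0..t, w u) z = laplace w z / z := by
  have hconv : ∀ t, 0 ≤ t → ∫ u in 0..t, w u = ∫ v in Icc 0 t, w (t - v) := fun t ht => by
    rw [integral_Icc_eq_integral_Ioc, ← intervalIntegral.integral_of_le ht,
      intervalIntegral.integral_comp_sub_left, sub_self, sub_zero]
  rw [laplace_congr hconv, laplace_integral_Icc_comp_sub hz
      ((integrableOn_Ici_iff_integrableOn_Ioi).mpr (exp_neg_integrableOn_Ioi 0 hz)) hw,
    integral_Ici_cexp_neg_mul hz, Complex.ofReal_zero, mul_zero, Complex.exp_zero, mul_one_div]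

open FourierTransform in
lemma eq_zero_of_laplace_eq_zero {F : ℝ → ℝ} (hF : Continuous F) (hneg : ∀ t ≤ 0, F t = 0)
    {K : ℝ} (hK : ∀ t, 0 ≤ t → |F t| ≤ K * t) (hlap : ∀ z : ℂ, 0 < z.re → laplace F z = 0)
    (t : ℝ) : F t = 0 := by
  set v : ℝ → ℂ := fun t => Complex.exp (-t) * F t with hv
  have hvcont : Continuous v := by fun_prop
  have hvint : Integrable v := by
    have hIic : IntegrableOn v (Iic 0) :=
      integrableOn_zero.congr_fun (fun t ht => by simp [hv, hneg t ht]) measurableSet_Iic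
    have hIoi : IntegrableOn v (Ioi 0) := by
      refine ((Real.GammaIntegral_convergent two_pos).const_mul K).mono'
        hvcont.aestronglyMeasurable ?_
      filter_upwards [ae_restrict_mem measurableSet_Ioi] with t (ht : 0 < t)
      calc ‖v t‖ = Real.exp (-t) * |F t| := by simp [hv, Complex.norm_exp]
        _ ≤ Real.exp (-t) * (K * t) := mul_le_mul_of_nonneg_left (hK t ht.le) (Real.exp_pos _).le
        _ = K * (Real.exp (-t) * t ^ ((2 : ℝ) - 1)) := by norm_num; ring
    simpa [Iic_union_Ioi] using hIic.union hIoi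
  have hfourier : 𝓕 v = 0 := by
    ext ξ
    rw [Real.fourier_real_eq_integral_exp_smul, Pi.zero_apply,
      ← hlap (1 + 2 * Real.pi * ξ * Complex.I) (by simp), laplace,
      setIntegral_eq_integral_of_forall_compl_eq_zero fun x hx => by
        simp [hneg x (not_le.mp hx).le]]
    refine integral_congr_ae (ae_of_all _ fun x => ?_)
    simp only [hv, smul_eq_mul, ← mul_assoc, ← Complex.exp_add]
    congr 2
    push_cast
    ring
  have hinv := hvcont.fourierInv_fourier_eq hvint (by rw [hfourier]; exact integrable_zero _ _ _)
  rw [hfourier] at hinv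
  have hvt : v t = 0 := by rw [← hinv]; simp [Real.fourierInv_eq]
  simpa [hv, Complex.exp_ne_zero] using hvt

lemma intervalIntegral_eq_zero_of_laplace_eq_zero {w : ℝ → ℝ} (hw : BoundedMeasurable w)
    (hneg : ∀ t < 0, w t = 0) (hlap : ∀ z : ℂ, 0 < z.re → laplace w z = 0) (a b : ℝ) :
    ∫ u in a..b, w u = 0 := by
  obtain ⟨K, hK⟩ := hw.2
  have hprimitive : ∀ t, ∫ u in 0..t, w u = 0 := by
    refine eq_zero_of_laplace_eq_zero
      (intervalIntegral.continuous_primitive hw.intervalIntegrable 0) (fun t ht => ?_)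
      (K := K) (fun t ht => ?_) fun z hz => by
        rw [laplace_intervalIntegral hz hw, hlap z hz, zero_div]
    · rw [intervalIntegral.integral_of_ge ht, integral_Ioc_eq_integral_Ioo,
        setIntegral_eq_zero_of_forall_eq_zero fun u hu => hneg u hu.2, neg_zero]
    · simpa [abs_of_nonneg ht] using intervalIntegral.norm_integral_le_of_norm_le_const
        (a := 0) (b := t) fun u _ => (Real.norm_eq_abs (w u)).trans_le (hK u)
  rw [← intervalIntegral.integral_interval_sub_left (hw.intervalIntegrable 0 b)
    (hw.intervalIntegrable 0 a), hprimitive, hprimitive, sub_zero]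

lemma abs_apply_le_frobR {n : ℕ} (A : Matrix (Fin n) (Fin n) ℝ) (i j : Fin n) :
    |A i j| ≤ frobR A :=
  Real.abs_le_sqrt <|
    (Finset.single_le_sum (f := fun j => A i j ^ 2) (fun _ _ => sq_nonneg _)
      (Finset.mem_univ j)).trans
    (Finset.single_le_sum (f := fun i => ∑ j, A i j ^ 2)
      (fun _ _ => Finset.sum_nonneg fun _ _ => sq_nonneg _) (Finset.mem_univ i))

lemma inv_hEta_mul_lapM {n : ℕ} {η : Matrix (Fin n) (Fin n) (SignedMeasure ℝ)} {z : ℂ}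
    (hdet : (hEta η z).det ≠ 0) : (hEta η z)⁻¹ * lapM η z = z • (hEta η z)⁻¹ - 1 := by
  have hlapM : lapM η z = z • 1 - hEta η z := by rw [hEta, sub_sub_cancel]
  rw [hlapM, Matrix.mul_sub, Matrix.mul_smul, Matrix.mul_one,
    Matrix.nonsing_inv_mul _ (isUnit_iff_ne_zero.mpr hdet)]

namespace FSpec

variable {n : ℕ} {δ : ℝ} {G : ℂ → Matrix (Fin n) (Fin n) ℂ} {f : ℝ → Matrix (Fin n) (Fin n) ℝ}

lemma exists_abs_apply_le (hδ : 0 < δ) (hf : FSpec δ G f) :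
    ∃ M, ∀ t, 0 ≤ t → ∀ a b, |f t a b| ≤ M * Real.exp (-(δ / 2) * t) := by
  obtain ⟨-, -, hdecay, -⟩ := hf
  obtain ⟨M, hM⟩ := hdecay (δ / 2) (by positivity) (by linarith)
  refine ⟨M, fun t ht a b => ?_⟩
  rw [mul_comm, neg_mul, Real.exp_neg, ← div_eq_inv_mul, le_div_iff₀' (Real.exp_pos _)]
  exact (mul_le_mul_of_nonneg_left (abs_apply_le_frobR _ a b) (Real.exp_pos _).le).trans
    (hM t ht)

lemma integrable_apply (hδ : 0 < δ) (hf : FSpec δ G f) (a b : Fin n) :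
    Integrable fun t => f t a b := by
  obtain ⟨M, hM⟩ := hf.exists_abs_apply_le hδ
  have hIio : IntegrableOn (fun t => f t a b) (Iio 0) :=
    integrableOn_zero.congr_fun (fun t ht => by simp [hf.2.1 t ht]) measurableSet_Iio
  have hIci : IntegrableOn (fun t => f t a b) (Ici 0) := by
    refine ((integrableOn_Ici_iff_integrableOn_Ioi).mpr
      ((exp_neg_integrableOn_Ioi 0 (half_pos hδ)).const_mul M)).mono'
      (hf.1 a b).aestronglyMeasurable ?_
    filter_upwards [ae_restrict_mem measurableSet_Ici] with t ht
    exact (Real.norm_eq_abs _).trans_le (hM t ht a b)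
  simpa [Iio_union_Ici] using hIio.union hIci

lemma boundedMeasurable_apply (hδ : 0 < δ) (hf : FSpec δ G f) (a b : Fin n) :
    BoundedMeasurable fun t => f t a b := by
  obtain ⟨M, hM⟩ := hf.exists_abs_apply_le hδ
  have hM0 : 0 ≤ M := by simpa using (abs_nonneg _).trans (hM 0 le_rfl a b)
  refine ⟨hf.1 a b, M, fun t => ?_⟩
  rcases lt_or_ge t 0 with ht | ht
  · simpa [hf.2.1 t ht] using hM0
  · refine (hM t ht a b).trans (mul_le_of_le_one_right hM0 (Real.exp_le_one_iff.mpr ?_))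
    nlinarith

lemma laplace_apply {η : Matrix (Fin n) (Fin n) (SignedMeasure ℝ)} (hC : CondC δ η G)
    (hf : FSpec δ G f) {z : ℂ} (hzδ : -δ < z.re) (hz : z ≠ 0) (a b : Fin n) :
    laplace (fun t => f t a b) z = (1 - z • (hEta η z)⁻¹) a b := by
  obtain ⟨-, -, -, hlap⟩ := hf
  obtain ⟨-, -, hG⟩ := hC
  rw [laplace, hlap z hzδ a b, hG z hzδ hz]

end FSpec

section Fundamental

/- `Ct` is the fundamental solution `C̃ = Iₙ − ∫_0^· f` of the delay equation. -/

variable {n : ℕ} {δ : ℝ} {η : Matrix (Fin n) (Fin n) (SignedMeasure ℝ)}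
  {G : ℂ → Matrix (Fin n) (Fin n) ℂ} {f Ct : ℝ → Matrix (Fin n) (Fin n) ℝ}

lemma boundedMeasurable_fundamental_apply (hδ : 0 < δ) (hf : FSpec δ G f)
    (hCt : ∀ τ a b, Ct τ a b = (1 : Matrix (Fin n) (Fin n) ℝ) a b - ∫ u in 0..τ, f u a b)
    (a b : Fin n) : BoundedMeasurable fun τ => Ct τ a b := by
  simpa only [hCt] using (BoundedMeasurable.const _).sub
    (hf.integrable_apply hδ a b).boundedMeasurable_primitive

lemma laplace_fundamental_apply (hδ : 0 < δ) (hC : CondC δ η G) (hf : FSpec δ G f)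
    (hCt : ∀ τ a b, Ct τ a b = (1 : Matrix (Fin n) (Fin n) ℝ) a b - ∫ u in 0..τ, f u a b)
    {z : ℂ} (hz : 0 < z.re) (a b : Fin n) :
    laplace (fun τ => Ct τ a b) z = (hEta η z)⁻¹ a b := by
  have hz0 : z ≠ 0 := by rintro rfl; simp at hz
  simp only [hCt]
  rw [laplace_sub hz (BoundedMeasurable.const _)
      (hf.integrable_apply hδ a b).boundedMeasurable_primitive, laplace_const hz,
    laplace_intervalIntegral hz (hf.boundedMeasurable_apply hδ a b),
    hf.laplace_apply hC (by linarith) hz0]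
  field_simp
  rcases eq_or_ne a b with rfl | hab <;> simp [*]

lemma laplace_kernel_add_convolution (hδ : 0 < δ) (hC : CondC δ η G) (hf : FSpec δ G f)
    (hCt : ∀ τ a b, Ct τ a b = (1 : Matrix (Fin n) (Fin n) ℝ) a b - ∫ u in 0..τ, f u a b)
    {z : ℂ} (hz : 0 < z.re) (i j : Fin n) :
    laplace (fun u => f u i j + ∑ k, sIntOn (η k j) (Icc 0 u) fun v => Ct (u - v) i k) z = 0 := by
  have hz0 : z ≠ 0 := by rintro rfl; simp at hz
  have hCtb := boundedMeasurable_fundamental_apply hδ hf hCt i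
  rw [laplace_add hz (hf.boundedMeasurable_apply hδ i j) (BoundedMeasurable.sum _
      fun k _ => (hCtb k).sIntOn_Icc_comp_sub _),
    laplace_sum _ hz fun k _ => (hCtb k).sIntOn_Icc_comp_sub _]
  simp only [laplace_sIntOn_Icc_comp_sub hz (hCtb _), laplace_fundamental_apply hδ hC hf hCt hz]
  have hmul : ∑ k, (hEta η z)⁻¹ i k * sIntOnC (η k j) (Ici 0) (fun v => Complex.exp (-z * v)) =
      ((hEta η z)⁻¹ * lapM η z) i j := rfl
  rw [hmul, inv_hEta_mul_lapM (hC.1 z (by linarith) hz0), hf.laplace_apply hC (by linarith) hz0]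
  simp

end Fundamental

theorem statement15_general {n : ℕ} (δ : ℝ) (hδ : 0 < δ)
    (η : Matrix (Fin n) (Fin n) (SignedMeasure ℝ))
    (G : ℂ → Matrix (Fin n) (Fin n) ℂ) (hC : CondC δ η G)
    (f : ℝ → Matrix (Fin n) (Fin n) ℝ) (hf : FSpec δ G f)
    (Ct : ℝ → Matrix (Fin n) (Fin n) ℝ)
    (hCt : ∀ t, Ct t =
      ((1 : Matrix (Fin n) (Fin n) ℝ) - Matrix.of fun i j => ∫ u in Set.Ici (0 : ℝ), f u i j)
        + Matrix.of fun i j => ∫ u in Set.Ioi t, f u i j) :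
    Ct 0 = 1 ∧
    ∀ s t : ℝ, 0 ≤ s → s < t → ∀ i j,
      Ct t i j - Ct s i j =
        ∫ u in s..t, ∑ k, sIntOn (η k j) (Set.Icc 0 u) fun v => Ct (u - v) i k := by
  have hCt' : ∀ τ a b, Ct τ a b = (1 : Matrix (Fin n) (Fin n) ℝ) a b - ∫ u in 0..τ, f u a b :=
    fun τ a b => by
      simpa only [hCt, Matrix.add_apply, Matrix.sub_apply, Matrix.of_apply] using
        sub_integral_Ici_add_integral_Ioi (hf.integrable_apply hδ a b) _ τ
  refine ⟨by ext a b; simp [hCt'], fun s t _ _ i j => ?_⟩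
  have hCtb := boundedMeasurable_fundamental_apply hδ hf hCt' i
  have hconv := BoundedMeasurable.sum Finset.univ fun k _ => (hCtb k).sIntOn_Icc_comp_sub (η k j)
  have hzero := intervalIntegral_eq_zero_of_laplace_eq_zero
    ((hf.boundedMeasurable_apply hδ i j).add hconv)
    (fun u hu => by simp [hf.2.1 u hu, sIntOn, Icc_eq_empty_of_lt hu])
    (fun z hz => laplace_kernel_add_convolution hδ hC hf hCt' hz i j) s t
  rw [intervalIntegral.integral_add ((hf.boundedMeasurable_apply hδ i j).intervalIntegrable s t)
    (hconv.intervalIntegrable s t)] at hzero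
  have hf_st := intervalIntegral.integral_interval_sub_left (a := 0) (b := t) (c := s)
    (hf.integrable_apply hδ i j).intervalIntegrable (hf.integrable_apply hδ i j).intervalIntegrable
  rw [hCt' t, hCt' s]
  linarith

/-- With `f` the kernel of the representation theorem,
`C₀ := Iₙ − ∫_0^∞ f`, `C(t) := ∫_t^∞ f(u) du` and `C̃ := C₀ + C`, one has `C̃(0) = Iₙ`
and `C̃(t) − C̃(s) = ∫_s^t (C̃ ∗ η)(u) du` for all `0 ≤ s < t`. -/
theorem statement15 {n : ℕ} (hn : 1 ≤ n) (δ : ℝ) (hδ : 0 < δ)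
    (η : Matrix (Fin n) (Fin n) (SignedMeasure ℝ))
    (hsupp : SuppNonneg η) (hmom : ExpMoment δ η)
    (G : ℂ → Matrix (Fin n) (Fin n) ℂ) (hC : CondC δ η G)
    (f : ℝ → Matrix (Fin n) (Fin n) ℝ) (hf : FSpec δ G f)
    (Ct : ℝ → Matrix (Fin n) (Fin n) ℝ)
    (hCt : ∀ t, Ct t =
      ((1 : Matrix (Fin n) (Fin n) ℝ) - Matrix.of fun i j => ∫ u in Set.Ici (0 : ℝ), f u i j)
        + Matrix.of fun i j => ∫ u in Set.Ioi t, f u i j) :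
    Ct 0 = 1 ∧
    ∀ s t : ℝ, 0 ≤ s → s < t → ∀ i j,
      Ct t i j - Ct s i j =
        ∫ u in s..t, ∑ k, sIntOn (η k j) (Set.Icc 0 u) fun v => Ct (u - v) i k :=
  statement15_general δ hδ η G hC f hf Ct hCt
end
end
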